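/- arXiv:1901.00651 — 2 statements merged into one kernel-verified Lean document; each statement's English description precedes it below -/
import Mathlib

section
/- Every weakly additive, order-preserving, normed functional (i.e., with $f(x_0) = 1$) on a partially ordered vector space with interior point $x_0$ of the positive cone is continuous. -/
/-!
The cone neighbourhood ⟨z; δ⟩ lies in the order interval [z - δ x₀, z + δ x₀], on which a
monotone weakly additive normed functional stays within δ of f z. It is a neighbourhood of z
because δ x₀, a positive multiple of the inner point x₀, is again an inner point of the cone.
-/

def InnerSeg {L : Type*} [AddCommGroup L] [Module ℝ L] (a b x : L) : Prop :=
  x ∈ segment ℝ a b ∧ x ≠ a ∧ x ≠ b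

def InnerPoint {L : Type*} [AddCommGroup L] [Module ℝ L] (S : Set L) (x : L) : Prop :=
  x ∈ S ∧ ∀ a b : L, InnerSeg a b x →
    ∃ c d : L, c ∈ segment ℝ a b ∩ S ∧ d ∈ segment ℝ a b ∩ S ∧ InnerSeg c d x

def coneNbhd {L : Type*} [AddCommGroup L] [PartialOrder L] [Module ℝ L]
    (x₀ z : L) (δ : ℝ) : Set L :=
  {y : L | InnerPoint {v : L | 0 ≤ v} (δ • x₀ + (y - z)) ∧
           InnerPoint {v : L | 0 ≤ v} (δ • x₀ - (y - z))}

def coneTop {L : Type*} [AddCommGroup L] [PartialOrder L] [Module ℝ L]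
    (x₀ : L) : TopologicalSpace L :=
  TopologicalSpace.generateFrom {s : Set L | ∃ z : L, ∃ δ : ℝ, 0 < δ ∧ s = coneNbhd x₀ z δ}

def WeaklyAdditive {L : Type*} [AddCommGroup L] [Module ℝ L] (x₀ : L) (f : L → ℝ) : Prop :=
  ∀ x : L, ∀ l : ℝ, f (x + l • x₀) = f x + l * f x₀

open Topology

section InnerPoint

variable {L M : Type*} [AddCommGroup L] [Module ℝ L] [AddCommGroup M] [Module ℝ M]

lemma mem_segment_map_iff (e : L ≃ₗ[ℝ] M) {a b x : L} :
    e x ∈ segment ℝ (e a) (e b) ↔ x ∈ segment ℝ a b := by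
  have h := image_segment ℝ (e : L →ₗ[ℝ] M).toAffineMap a b
  simp only [LinearMap.coe_toAffineMap, LinearEquiv.coe_coe] at h
  rw [← h, e.injective.mem_set_image]

lemma InnerSeg.map (e : L ≃ₗ[ℝ] M) {a b x : L} (h : InnerSeg a b x) :
    InnerSeg (e a) (e b) (e x) :=
  ⟨(mem_segment_map_iff e).2 h.1, e.injective.ne h.2.1, e.injective.ne h.2.2⟩

lemma InnerPoint.image (e : L ≃ₗ[ℝ] M) {S : Set L} {x : L} (hx : InnerPoint S x) :
    InnerPoint (e '' S) (e x) := by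
  refine ⟨Set.mem_image_of_mem e hx.1, fun a b hab => ?_⟩
  have hpre : InnerSeg (e.symm a) (e.symm b) x := by
    simpa using hab.map e.symm
  obtain ⟨c, d, ⟨hc, hcS⟩, ⟨hd, hdS⟩, hcd⟩ := hx.2 _ _ hpre
  refine ⟨e c, e d, ⟨?_, Set.mem_image_of_mem e hcS⟩, ⟨?_, Set.mem_image_of_mem e hdS⟩,
    hcd.map e⟩
  · simpa using (mem_segment_map_iff e).2 hc
  · simpa using (mem_segment_map_iff e).2 hd

end InnerPoint

lemma image_smul_nonneg_cone {L : Type*} [AddCommGroup L] [PartialOrder L] [Module ℝ L]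
    [PosSMulMono ℝ L] {δ : ℝ} (hδ : 0 < δ) :
    LinearEquiv.smulOfNeZero ℝ L δ hδ.ne' '' {v : L | 0 ≤ v} = {v : L | 0 ≤ v} := by
  ext v
  rw [LinearEquiv.image_eq_preimage_symm]
  exact smul_nonneg_iff_nonneg_of_pos_left (inv_pos.2 hδ)

lemma InnerPoint.smul_nonneg_cone {L : Type*} [AddCommGroup L] [PartialOrder L] [Module ℝ L]
    [PosSMulMono ℝ L] {δ : ℝ} (hδ : 0 < δ) {x : L}
    (hx : InnerPoint {v : L | 0 ≤ v} x) : InnerPoint {v : L | 0 ≤ v} (δ • x) := by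
  have h := hx.image (LinearEquiv.smulOfNeZero ℝ L δ hδ.ne')
  rwa [image_smul_nonneg_cone hδ, LinearEquiv.smulOfNeZero_apply] at h

section ConeTopology

variable {L : Type*} [AddCommGroup L] [PartialOrder L] [Module ℝ L]

lemma isOpen_coneNbhd (x₀ z : L) {δ : ℝ} (hδ : 0 < δ) :
    IsOpen[coneTop x₀] (coneNbhd x₀ z δ) :=
  TopologicalSpace.isOpen_generateFrom_of_mem ⟨z, δ, hδ, rfl⟩

lemma mem_coneNbhd_self [PosSMulMono ℝ L] {x₀ : L} (hx₀ : InnerPoint {v : L | 0 ≤ v} x₀)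
    (z : L) {δ : ℝ} (hδ : 0 < δ) : z ∈ coneNbhd x₀ z δ := by
  constructor <;> simpa using hx₀.smul_nonneg_cone hδ

lemma coneNbhd_subset_Icc [IsOrderedAddMonoid L] (x₀ z : L) (δ : ℝ) :
    coneNbhd x₀ z δ ⊆ Set.Icc (z + (-δ) • x₀) (z + δ • x₀) := by
  rintro y ⟨hlow, hup⟩
  have hlow' : 0 ≤ δ • x₀ + (y - z) := hlow.1
  have hup' : 0 ≤ δ • x₀ - (y - z) := hup.1
  constructor
  · rw [← sub_nonneg]
    convert hlow' using 1
    module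
  · rw [← sub_nonneg]
    convert hup' using 1
    module

end ConeTopology

lemma WeaklyAdditive.abs_sub_le_of_mem_Icc {L : Type*} [AddCommGroup L] [Preorder L] [Module ℝ L]
    {x₀ : L} {f : L → ℝ} (hwa : WeaklyAdditive x₀ f) (hmono : Monotone f) (hnormed : f x₀ = 1)
    {z y : L} {δ : ℝ} (hy : y ∈ Set.Icc (z + (-δ) • x₀) (z + δ • x₀)) : |f y - f z| ≤ δ := by
  have hlow := hmono hy.1
  have hup := hmono hy.2
  rw [hwa, hnormed] at hlow hup
  rw [abs_sub_le_iff]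
  constructor <;> linarith

theorem stmt8_general {L : Type*} [AddCommGroup L] [PartialOrder L] [IsOrderedAddMonoid L] [Module ℝ L] [PosSMulStrictMono ℝ L]
    (x₀ : L) (hx₀ : InnerPoint {v : L | 0 ≤ v} x₀)
    (f : L → ℝ) (hwa : WeaklyAdditive x₀ f) (hmono : Monotone f)
    (hnormed : f x₀ = 1) :
    @Continuous L ℝ (coneTop x₀) _ f := by
  let := coneTop x₀
  refine continuous_iff_continuousAt.2 fun z => Metric.tendsto_nhds.2 fun ε hε => ?_
  have hnbhd : coneNbhd x₀ z (ε / 2) ∈ 𝓝 z :=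
    (isOpen_coneNbhd x₀ z (by positivity)).mem_nhds (mem_coneNbhd_self hx₀ z (by positivity))
  filter_upwards [hnbhd] with y hy
  rw [Real.dist_eq]
  linarith [hwa.abs_sub_le_of_mem_Icc hmono hnormed (coneNbhd_subset_Icc x₀ z _ hy)]

theorem stmt8 {L : Type*} [AddCommGroup L] [PartialOrder L] [IsOrderedAddMonoid L] [Module ℝ L] [PosSMulStrictMono ℝ L] [PosSMulReflectLT ℝ L]
    (x₀ : L) (hx₀ : InnerPoint {v : L | 0 ≤ v} x₀)
    (f : L → ℝ) (hwa : WeaklyAdditive x₀ f) (hmono : Monotone f)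
    (hnormed : f x₀ = 1) :
    @Continuous L ℝ (coneTop x₀) _ f :=
  stmt8_general x₀ hx₀ f hwa hmono hnormed
end

section
/- Let $E$ be a complete space with an order unit (order-norm Banach), $F$ a vector space with an order unit, and $\mathcal{H}$ a family of weakly additive, order-preserving operators $T\colon E \to F$ such that each orbit $\{T(x) : T \in \mathcal{H}\}$ is bounded in $F$. Then $\mathcal{H}$ is equicontinuous. -/
/-- The order norm `‖x‖ = inf {c > 0 : -c•e ≤ x ≤ c•e}` of a space with order unit `e`. -/
noncomputable def ordNorm {L : Type*} [AddCommGroup L] [PartialOrder L] [Module ℝ L]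
    (e x : L) : ℝ :=
  sInf {c : ℝ | 0 < c ∧ -(c • e) ≤ x ∧ x ≤ c • e}

/-- `e` is an order unit: every element is bounded by a multiple of `e`. -/
def IsOrderUnit {L : Type*} [AddCommGroup L] [PartialOrder L] [Module ℝ L] (e : L) : Prop :=
  ∀ x : L, ∃ l : ℝ, 0 < l ∧ -(l • e) ≤ x ∧ x ≤ l • e

/-- The space is Archimedean with respect to the order unit `e`. -/
def IsArch {L : Type*} [AddCommGroup L] [PartialOrder L] [Module ℝ L] (e : L) : Prop :=
  ∀ x : L, (∀ n : ℕ, 0 < n → (n : ℝ) • x ≤ e) → x ≤ 0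

/-- An operator `T` is weakly additive with respect to the order unit `e`. -/
def WAddOp {L M : Type*} [AddCommGroup L] [Module ℝ L] [AddCommGroup M] [Module ℝ M]
    (e : L) (T : L → M) : Prop :=
  ∀ x : L, ∀ l : ℝ, T (x + l • e) = T x + l • T e

/-- The ball of radius `δ` around `z` in the order norm. -/
def ordBall {L : Type*} [AddCommGroup L] [PartialOrder L] [Module ℝ L]
    (e z : L) (δ : ℝ) : Set L :=
  {y : L | ordNorm e (y - z) < δ}

/-- The order topology, generated by the order-norm balls. -/
noncomputable def ordTop {L : Type*} [AddCommGroup L] [PartialOrder L] [Module ℝ L]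
    (e : L) : TopologicalSpace L :=
  TopologicalSpace.generateFrom {s : Set L | ∃ z : L, ∃ δ : ℝ, 0 < δ ∧ s = ordBall e z δ}

/-- `A` is of the second category: it is not contained in a countable union
of nowhere dense sets. -/
def SecondCategory {X : Type*} (t : TopologicalSpace X) (A : Set X) : Prop :=
  ¬ ∃ f : ℕ → Set X, (∀ n, @interior X t (@closure X t (f n)) = ∅) ∧ A ⊆ ⋃ n, f n

/-- The space with order unit `e` is complete (Banach) in its order norm:
every Cauchy sequence converges. -/
def OrdComplete {L : Type*} [AddCommGroup L] [PartialOrder L] [Module ℝ L] (e : L) : Prop :=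
  ∀ u : ℕ → L,
    (∀ ε : ℝ, 0 < ε → ∃ N : ℕ, ∀ m ≥ N, ∀ n ≥ N, ordNorm e (u m - u n) < ε) →
    ∃ x : L, ∀ ε : ℝ, 0 < ε → ∃ N : ℕ, ∀ n ≥ N, ordNorm e (u n - x) < ε

/-! A weakly additive monotone operator fixes `0` and is linear on the line `ℝ • e`, so it maps the
order interval `[-c • e, c • e]` into `[-c • T e, c • T e]`. Hence `‖T x‖ ≤ ‖x‖ · K` as soon as
`T e ≤ K • f`, and the bounded orbit of the order unit supplies one such `K` for the whole
family. -/

section OrderNorm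

variable {L : Type*} [AddCommGroup L] [PartialOrder L] [Module ℝ L] {e x : L}

lemma ordNorm_le_of_mem {c : ℝ} (hc : 0 < c) (hlo : -(c • e) ≤ x) (hup : x ≤ c • e) :
    ordNorm e x ≤ c :=
  csInf_le ⟨0, fun _ hc' => hc'.1.le⟩ ⟨hc, hlo, hup⟩

lemma IsOrderUnit.nonneg [IsOrderedAddMonoid L] [PosSMulMono ℝ L] (hu : IsOrderUnit e) :
    0 ≤ e := by
  obtain ⟨l, hl, -, h⟩ := hu 0
  simpa [smul_smul, inv_mul_cancel₀ hl.ne'] using smul_nonneg (inv_nonneg.2 hl.le) h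

lemma IsOrderUnit.le_smul_of_ordNorm_lt [IsOrderedAddMonoid L] [PosSMulMono ℝ L]
    (hu : IsOrderUnit e) {d : ℝ} (h : ordNorm e x < d) : x ≤ d • e := by
  obtain ⟨c, ⟨-, -, hup⟩, hcd⟩ := exists_lt_of_csInf_lt (hu x) h
  exact hup.trans (smul_le_smul_of_nonneg_right hcd.le hu.nonneg)

end OrderNorm

namespace WAddOp

variable {L M : Type*} [AddCommGroup L] [Module ℝ L] [AddCommGroup M] [Module ℝ M]
  {e : L} {T : L → M}

lemma map_zero (hT : WAddOp e T) : T 0 = 0 := by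
  simpa using hT 0 1

lemma map_smul_unit (hT : WAddOp e T) (c : ℝ) : T (c • e) = c • T e := by
  simpa [hT.map_zero] using hT 0 c

end WAddOp

lemma ordNorm_map_le_mul {E F : Type*} [AddCommGroup E] [PartialOrder E] [Module ℝ E]
    [AddCommGroup F] [PartialOrder F] [IsOrderedAddMonoid F] [Module ℝ F] [PosSMulMono ℝ F]
    {eE : E} {eF : F} (huE : IsOrderUnit eE) {T : E → F} (hT : WAddOp eE T) (hmono : Monotone T)
    {K : ℝ} (hK : 0 < K) (hTe : T eE ≤ K • eF) (x : E) :
    ordNorm eF (T x) ≤ ordNorm eE x * K := by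
  rw [← div_le_iff₀ hK]
  refine le_csInf (huE x) fun c ⟨hc, hxlo, hxup⟩ => (div_le_iff₀ hK).2 ?_
  have hcK : c • T eE ≤ (c * K) • eF := by
    rw [mul_smul]; exact smul_le_smul_of_nonneg_left hTe hc.le
  refine ordNorm_le_of_mem (mul_pos hc hK) ?_ ?_
  · calc -((c * K) • eF) ≤ -(c • T eE) := neg_le_neg hcK
      _ = T (-(c • eE)) := by rw [← neg_smul c eE, hT.map_smul_unit, neg_smul]
      _ ≤ T x := hmono hxlo
  · calc T x ≤ T (c • eE) := hmono hxup
      _ = c • T eE := hT.map_smul_unit c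
      _ ≤ (c * K) • eF := hcK

theorem stmt14_general {E F : Type*}
    [AddCommGroup E] [PartialOrder E] [Module ℝ E]
    [AddCommGroup F] [PartialOrder F] [IsOrderedAddMonoid F] [Module ℝ F]
    [PosSMulStrictMono ℝ F]
    (eE : E) (eF : F) (huE : IsOrderUnit eE)
    (huF : IsOrderUnit eF)
    (H : Set (E → F)) (hH : ∀ T ∈ H, WAddOp eE T ∧ Monotone T)
    (hbdd : ∀ x : E, ∃ M : ℝ, ∀ T ∈ H, ordNorm eF (T x) ≤ M) :
    ∀ ε : ℝ, 0 < ε → ∃ δ : ℝ, 0 < δ ∧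
      ∀ T ∈ H, ∀ x : E, ordNorm eE x < δ → ordNorm eF (T x) < ε := by
  intro ε hε
  obtain ⟨M, hM⟩ := hbdd eE
  set K := max M 0 + 1
  have hK : 0 < K := by positivity
  have hTe : ∀ T ∈ H, T eE ≤ K • eF := fun T hT =>
    huF.le_smul_of_ordNorm_lt <| (hM T hT).trans_lt <| by linarith [le_max_left M 0]
  refine ⟨ε / K, by positivity, fun T hT x hx => ?_⟩
  calc ordNorm eF (T x) ≤ ordNorm eE x * K :=
        ordNorm_map_le_mul huE (hH T hT).1 (hH T hT).2 hK (hTe T hT) x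
    _ < ε / K * K := by gcongr
    _ = ε := div_mul_cancel₀ ε hK.ne'

theorem stmt14 {E F : Type*}
    [AddCommGroup E] [PartialOrder E] [IsOrderedAddMonoid E] [Module ℝ E]
    [PosSMulStrictMono ℝ E] [PosSMulReflectLT ℝ E]
    [AddCommGroup F] [PartialOrder F] [IsOrderedAddMonoid F] [Module ℝ F]
    [PosSMulStrictMono ℝ F] [PosSMulReflectLT ℝ F]
    (eE : E) (eF : F) (huE : IsOrderUnit eE) (haE : IsArch eE)
    (huF : IsOrderUnit eF) (haF : IsArch eF)
    (hcomp : OrdComplete eE)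
    (H : Set (E → F)) (hH : ∀ T ∈ H, WAddOp eE T ∧ Monotone T)
    (hbdd : ∀ x : E, ∃ M : ℝ, ∀ T ∈ H, ordNorm eF (T x) ≤ M) :
    ∀ ε : ℝ, 0 < ε → ∃ δ : ℝ, 0 < δ ∧
      ∀ T ∈ H, ∀ x : E, ordNorm eE x < δ → ordNorm eF (T x) < ε :=
  stmt14_general eE eF huE huF H hH hbdd
end
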